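/- arXiv:2410.23100 — 3 statements merged into one kernel-verified Lean document; each statement's English description precedes it below -/
import Mathlib

section
/- Let D ⊆ ℝ^d be a bounded Lipschitz domain containing the origin such that x · n(x) ≥ a > 0 for all boundary points x at which the outer unit normal n(x) exists. Then D is star-shaped with respect to the closed ball of radius a centered at the origin, i.e., for every z with |z| ≤ a and every x ∈ D, the segment [z, x] is contained in the closure of D. -/
open RealInnerProductSpace

/-- `ν` is an outer unit normal to `D` at the boundary point `x`, in the
first-order sense: `⟪y - x, ν⟫ ≤ o(‖y - x‖)` for `y ∈ closure D` near `x`. -/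
def HasOuterNormalAt (d : ℕ) (D : Set (EuclideanSpace ℝ (Fin d)))
    (x ν : EuclideanSpace ℝ (Fin d)) : Prop :=
  x ∈ frontier D ∧ ‖ν‖ = 1 ∧
    ∀ ε > (0 : ℝ), ∃ δ > (0 : ℝ), ∀ y ∈ closure D, ‖y - x‖ < δ →
      ⟪y - x, ν⟫ ≤ ε * ‖y - x‖

/-!
Let `‖z‖ < a` and `x ∈ D`. If the segment from `x` to `z` left `D`, it would do so for the first
time at a boundary point `y = x + T • (z - x)` with `0 < T ≤ 1`. Since the segment runs inside `D`
just before `y`, the outer normal `ν` at `y` satisfies `⟪x - z, ν⟫ ≤ 0`, hence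
`⟪y, ν⟫ ≤ ⟪z, ν⟫ ≤ ‖z‖ < a`, against `a ≤ ⟪y, ν⟫`. So the open ball of radius `a` sees all of `D`,
and the closed ball sees `closure D` because `{z | segment ℝ z x ⊆ closure D}` is closed.
-/

open Set Filter Topology

lemma exists_first_exit {X : Type*} [TopologicalSpace X] {D : Set X} (hD : IsOpen D)
    {γ : ℝ → X} (hγ : Continuous γ) (h0 : γ 0 ∈ D) {t : ℝ} (ht : 0 ≤ t) (hγt : γ t ∉ D) :
    ∃ T ∈ Ioc 0 t, γ T ∈ frontier D ∧ ∀ s ∈ Ico 0 T, γ s ∈ D := by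
  set S := Icc 0 t ∩ γ ⁻¹' Dᶜ
  have hSt : t ∈ S := ⟨⟨ht, le_rfl⟩, hγt⟩
  have hS0 : BddBelow S := ⟨0, fun s hs => hs.1.1⟩
  have hTS : sInf S ∈ S :=
    (isClosed_Icc.inter (hD.isClosed_compl.preimage hγ)).csInf_mem ⟨t, hSt⟩ hS0
  have hT0 : 0 < sInf S :=
    hTS.1.1.lt_of_ne fun h => hTS.2 (h ▸ h0)
  have before : ∀ s ∈ Ico 0 (sInf S), γ s ∈ D := fun s hs => by
    by_contra hγs
    exact hs.2.not_ge (csInf_le hS0 ⟨⟨hs.1, hs.2.le.trans hTS.1.2⟩, hγs⟩)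
  have hclosure : γ (sInf S) ∈ closure D :=
    mem_closure_of_tendsto ((hγ.tendsto _).mono_left nhdsWithin_le_nhds)
      (mem_of_superset (Ioo_mem_nhdsLT hT0) fun s hs => before s ⟨hs.1.le, hs.2⟩)
  exact ⟨sInf S, ⟨hT0, hTS.1.2⟩, hD.frontier_eq ▸ ⟨hclosure, hTS.2⟩, before⟩

lemma isClosed_setOf_segment_subset {E : Type*} [AddCommGroup E] [Module ℝ E] [TopologicalSpace E]
    [IsTopologicalAddGroup E] [ContinuousSMul ℝ E] {C : Set E} (hC : IsClosed C) (x : E) :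
    IsClosed {z | segment ℝ z x ⊆ C} := by
  have : {z | segment ℝ z x ⊆ C} = ⋂ θ ∈ Icc (0 : ℝ) 1, (fun z => z + θ • (x - z)) ⁻¹' C := by
    ext z
    simp only [segment_eq_image', image_subset_iff, mem_iInter₂]
    rfl
  rw [this]
  exact isClosed_biInter fun θ _ => hC.preimage (by fun_prop)

namespace HasOuterNormalAt

variable {d : ℕ} {D : Set (EuclideanSpace ℝ (Fin d))} {y ν : EuclideanSpace ℝ (Fin d)}

lemma inner_le_mul_norm_of_eventually_mem (h : HasOuterNormalAt d D y ν)
    {v : EuclideanSpace ℝ (Fin d)} (hv : ∀ᶠ s : ℝ in 𝓝[>] 0, y + s • v ∈ closure D)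
    {ε : ℝ} (hε : 0 < ε) : ⟪v, ν⟫ ≤ ε * ‖v‖ := by
  obtain ⟨δ, hδ, hν⟩ := h.2.2 ε hε
  have hsmall : ∀ᶠ s in 𝓝[>] (0 : ℝ), s * ‖v‖ < δ :=
    nhdsWithin_le_nhds <| ((continuous_id.mul continuous_const).tendsto' 0 0 (by simp)).eventually
      (gt_mem_nhds hδ)
  obtain ⟨s, hs : 0 < s, hsδ, hmem⟩ := (eventually_mem_nhdsWithin.and (hsmall.and hv)).exists
  have hnorm : ‖y + s • v - y‖ = s * ‖v‖ := by
    rw [add_sub_cancel_left, norm_smul, Real.norm_of_nonneg hs.le]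
  have := hν _ hmem (hnorm ▸ hsδ)
  rw [hnorm, add_sub_cancel_left, real_inner_smul_left, mul_left_comm] at this
  exact le_of_mul_le_mul_left this hs

lemma inner_nonpos_of_eventually_mem (h : HasOuterNormalAt d D y ν)
    {v : EuclideanSpace ℝ (Fin d)} (hv : ∀ᶠ s : ℝ in 𝓝[>] 0, y + s • v ∈ closure D) :
    ⟪v, ν⟫ ≤ 0 :=
  ge_of_tendsto (x := 𝓝[>] (0 : ℝ))
    (((continuous_id.mul continuous_const).tendsto' 0 0 (by simp)).mono_left nhdsWithin_le_nhds)
    (eventually_nhdsWithin_of_forall fun _ hε => h.inner_le_mul_norm_of_eventually_mem hv hε)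

end HasOuterNormalAt

section NormalCondition

variable {d : ℕ} {D : Set (EuclideanSpace ℝ (Fin d))} {a : ℝ}

lemma segment_subset_of_norm_lt (hopen : IsOpen D)
    (hnormal : ∀ x ∈ frontier D, ∃ ν, HasOuterNormalAt d D x ν)
    (hcond : ∀ x ν, HasOuterNormalAt d D x ν → a ≤ ⟪x, ν⟫)
    {z x : EuclideanSpace ℝ (Fin d)} (hz : ‖z‖ < a) (hx : x ∈ D) : segment ℝ z x ⊆ D := by
  rw [segment_symm, segment_eq_image']
  rintro _ ⟨t, ht, rfl⟩
  by_contra hout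
  obtain ⟨T, hT, hfr, hbefore⟩ := exists_first_exit hopen (γ := fun s => x + s • (z - x))
    (by fun_prop) (by simpa using hx) ht.1 hout
  obtain ⟨ν, hν⟩ := hnormal _ hfr
  have hback : ∀ᶠ s in 𝓝[>] (0 : ℝ), x + T • (z - x) + s • (x - z) ∈ closure D := by
    filter_upwards [Ioo_mem_nhdsGT hT.1] with s hs
    have hmem := hbefore (T - s) ⟨by linarith [hs.2], by linarith [hs.1]⟩
    convert subset_closure hmem using 1
    module
  have hxz : ⟪x - z, ν⟫ ≤ 0 := hν.inner_nonpos_of_eventually_mem hback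
  have hzν : ⟪z, ν⟫ ≤ ‖z‖ := by
    simpa [hν.2.1] using real_inner_le_norm z ν
  have hsplit : ⟪x + T • (z - x), ν⟫ = ⟪z, ν⟫ + (1 - T) * ⟪x - z, ν⟫ := by
    rw [show x + T • (z - x) = z + (1 - T) • (x - z) by module, inner_add_left,
      real_inner_smul_left]
  have := hcond _ _ hν
  nlinarith [hT.2.trans ht.2]

end NormalCondition

theorem starShaped_wrt_ball_of_normal_condition_general
    (d : ℕ) (D : Set (EuclideanSpace ℝ (Fin d))) (a : ℝ)
    (hopen : IsOpen D) (ha : 0 < a)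
    (hnormal : ∀ x ∈ frontier D, ∃ ν, HasOuterNormalAt d D x ν)
    (hcond : ∀ x ν, HasOuterNormalAt d D x ν → a ≤ ⟪x, ν⟫) :
    ∀ z : EuclideanSpace ℝ (Fin d), ‖z‖ ≤ a →
      ∀ x ∈ D, segment ℝ z x ⊆ closure D := by
  intro z hz x hx
  have hball : Metric.ball 0 a ⊆ {z | segment ℝ z x ⊆ closure D} := fun w hw =>
    (segment_subset_of_norm_lt hopen hnormal hcond (mem_ball_zero_iff.1 hw) hx).trans
      subset_closure
  have hclosed := (isClosed_setOf_segment_subset isClosed_closure x).closure_subset_iff.2 hball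
  rw [closure_ball 0 ha.ne'] at hclosed
  exact hclosed (mem_closedBall_zero_iff.2 hz)

/-- a bounded domain containing the origin whose boundary points
(where the outer unit normal exists) satisfy `x · n(x) ≥ a > 0` is star-shaped
with respect to the closed ball of radius `a` centered at the origin. -/
theorem starShaped_wrt_ball_of_normal_condition
    (d : ℕ) (D : Set (EuclideanSpace ℝ (Fin d))) (a : ℝ)
    (hopen : IsOpen D) (hbd : Bornology.IsBounded D)
    (h0 : (0 : EuclideanSpace ℝ (Fin d)) ∈ D) (ha : 0 < a)
    (hnormal : ∀ x ∈ frontier D, ∃ ν, HasOuterNormalAt d D x ν)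
    (hcond : ∀ x ν, HasOuterNormalAt d D x ν → a ≤ ⟪x, ν⟫) :
    ∀ z : EuclideanSpace ℝ (Fin d), ‖z‖ ≤ a →
      ∀ x ∈ D, segment ℝ z x ⊆ closure D :=
  starShaped_wrt_ball_of_normal_condition_general d D a hopen ha hnormal hcond
end

section
/- Under the hypotheses of the previous statement (Φ nonnegative, bounded by M, and L-Lipschitz in δ uniformly in r, for |δ|,|δ'| ≤ γ), the Hellinger distance between the posteriors satisfies d_Hell(μ^δ, μ^{δ'}) ≤ C L e^{(3/2)M} |δ − δ'| for an absolute constant C > 0 independent of M, L, γ. -/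
/-!
Write `Z(δ) = ∫ e^{-Φ(·,δ)} dμ₀ ≥ e^{-M}`. The square-root density factors as
`e^{-Φ(r,δ)/2} · Z(δ)^{-1/2}`, and each factor moves by at most a multiple of `L‖δ - δ'‖`:
`t ↦ e^{-t/2}` is `1/2`-Lipschitz on `t ≥ 0`, and `z ↦ z^{-1/2}` is `e^{3M/2}/2`-Lipschitz on
`z ≥ e^{-M}`, while `|Z(δ) - Z(δ')| ≤ L‖δ - δ'‖`. Hence the difference of the square-root
densities is bounded pointwise by `L‖δ - δ'‖ e^{3M/2}`, which bounds the Hellinger distance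
with `C = 1`.
-/

open MeasureTheory Real

lemma abs_exp_neg_sub_exp_neg_le {u v : ℝ} (hu : 0 ≤ u) (hv : 0 ≤ v) :
    |exp (-u) - exp (-v)| ≤ |u - v| := by
  wlog h : v ≤ u generalizing u v
  · rw [abs_sub_comm, abs_sub_comm u v]
    exact this hv hu (le_of_not_ge h)
  have hfactor : exp (-u) = exp (-v) * exp (-(u - v)) := by rw [← exp_add]; ring_nf
  have hgap : 1 - exp (-(u - v)) ≤ u - v := by linarith [add_one_le_exp (-(u - v))]
  have hv_le : exp (-v) ≤ 1 := exp_le_one_iff.2 (by linarith)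
  have hexp_le : exp (-u) ≤ exp (-v) := exp_le_exp.2 (by linarith)
  rw [abs_of_nonpos (by linarith), abs_of_nonneg (by linarith)]
  nlinarith [exp_pos (-v), exp_pos (-(u - v))]

lemma abs_inv_sqrt_sub_inv_sqrt_le {b x y : ℝ} (hb : 0 < b) (hx : b ^ 2 ≤ x) (hy : b ^ 2 ≤ y) :
    |(√x)⁻¹ - (√y)⁻¹| ≤ |x - y| / (2 * b ^ 3) := by
  have hbx : b ≤ √x := le_sqrt_of_sq_le hx
  have hby : b ≤ √y := le_sqrt_of_sq_le hy
  have hsx : 0 < √x := hb.trans_le hbx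
  have hsy : 0 < √y := hb.trans_le hby
  have hdiff : (√x)⁻¹ - (√y)⁻¹ = (√y ^ 2 - √x ^ 2) / ((√x + √y) * (√x * √y)) := by
    field_simp
    ring
  rw [sq_sqrt ((sq_nonneg b).trans hx), sq_sqrt ((sq_nonneg b).trans hy)] at hdiff
  have hden : 2 * b ^ 3 ≤ (√x + √y) * (√x * √y) := by
    nlinarith [mul_le_mul hbx hby hb.le hsx.le]
  have hb3 : 0 < 2 * b ^ 3 := by positivity
  rw [hdiff, abs_div, abs_of_pos (hb3.trans_le hden), abs_sub_comm y x]
  exact div_le_div_of_nonneg_left (abs_nonneg _) hb3 hden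

lemma abs_sqrt_exp_neg_div_sub_le {M ε u v Z Z' : ℝ} (hM : 0 ≤ M) (hu : 0 ≤ u) (hv : 0 ≤ v)
    (huv : |u - v| ≤ ε) (hZ : exp (-M) ≤ Z) (hZ' : exp (-M) ≤ Z') (hZZ' : |Z - Z'| ≤ ε) :
    |√(exp (-u) / Z) - √(exp (-v) / Z')| ≤ ε * exp (3 / 2 * M) := by
  set b := exp (-(M / 2))
  have hb : 0 < b := exp_pos _
  have hb_sq : b ^ 2 = exp (-M) := by rw [← exp_nat_mul]; ring_nf
  have hb_inv : b⁻¹ = exp (M / 2) := by rw [← exp_neg, neg_neg]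
  have hb_inv_cube : (b ^ 3)⁻¹ = exp (3 / 2 * M) := by rw [← exp_nat_mul, ← exp_neg]; ring_nf
  have hZb : b ^ 2 ≤ Z := hb_sq ▸ hZ
  have hZb' : b ^ 2 ≤ Z' := hb_sq ▸ hZ'
  have hsqrt_density (t W : ℝ) : √(exp (-t) / W) = exp (-t / 2) * (√W)⁻¹ := by
    rw [sqrt_div (exp_pos _).le, ← exp_half, div_eq_mul_inv]
  rw [hsqrt_density, hsqrt_density]
  have hexp_half : |exp (-u / 2) - exp (-v / 2)| ≤ ε / 2 := by
    have := abs_exp_neg_sub_exp_neg_le (by positivity : 0 ≤ u / 2) (by positivity : 0 ≤ v / 2)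
    rw [← sub_div, abs_div, abs_two] at this
    rw [neg_div, neg_div]
    linarith
  have hinv_sqrt : |(√Z)⁻¹ - (√Z')⁻¹| ≤ ε / 2 * exp (3 / 2 * M) := by
    refine (abs_inv_sqrt_sub_inv_sqrt_le hb hZb hZb').trans ?_
    rw [← hb_inv_cube, div_mul_eq_div_div, ← div_eq_mul_inv]
    gcongr
  have hinv_sqrt_le : (√Z)⁻¹ ≤ exp (M / 2) :=
    hb_inv ▸ inv_anti₀ hb (le_sqrt_of_sq_le hZb)
  have hv_le : exp (-v / 2) ≤ 1 := exp_le_one_iff.2 (by linarith)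
  have hexp_mono : exp (M / 2) ≤ exp (3 / 2 * M) := exp_le_exp.2 (by linarith)
  calc |exp (-u / 2) * (√Z)⁻¹ - exp (-v / 2) * (√Z')⁻¹|
      = |(exp (-u / 2) - exp (-v / 2)) * (√Z)⁻¹ + exp (-v / 2) * ((√Z)⁻¹ - (√Z')⁻¹)| := by
        ring_nf
    _ ≤ ε / 2 * exp (M / 2) + 1 * (ε / 2 * exp (3 / 2 * M)) := by
        refine (abs_add_le _ _).trans (add_le_add ?_ ?_) <;> rw [abs_mul]
        · rw [abs_of_nonneg (inv_nonneg.2 (sqrt_nonneg Z))]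
          exact mul_le_mul hexp_half hinv_sqrt_le (inv_nonneg.2 (sqrt_nonneg Z))
            ((abs_nonneg _).trans hexp_half)
        · rw [abs_of_pos (exp_pos _)]
          exact mul_le_mul hv_le hinv_sqrt (abs_nonneg _) zero_le_one
    _ ≤ ε * exp (3 / 2 * M) := by nlinarith [(abs_nonneg _).trans huv]

section

variable {X : Type*} [MeasurableSpace X] (μ : Measure X) {f g : X → ℝ}

lemma integrable_exp_neg [IsFiniteMeasure μ] (hf : Measurable f) (hf0 : ∀ x, 0 ≤ f x) :
    Integrable (fun x => exp (-f x)) μ :=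
  (integrable_const (1 : ℝ)).mono' (by fun_prop) <| ae_of_all _ fun x => by
    simpa [abs_of_pos (exp_pos _)] using hf0 x

lemma exp_neg_le_integral_exp_neg [IsProbabilityMeasure μ] {M : ℝ} (hf : Measurable f)
    (hf0 : ∀ x, 0 ≤ f x) (hfM : ∀ x, f x ≤ M) :
    exp (-M) ≤ ∫ x, exp (-f x) ∂μ := by
  simpa using integral_mono (integrable_const (exp (-M))) (integrable_exp_neg μ hf hf0)
    fun x => exp_le_exp.2 (neg_le_neg (hfM x))

lemma abs_integral_exp_neg_sub_le [IsProbabilityMeasure μ] {ε : ℝ} (hf : Measurable f)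
    (hg : Measurable g) (hf0 : ∀ x, 0 ≤ f x) (hg0 : ∀ x, 0 ≤ g x) (hfg : ∀ x, |f x - g x| ≤ ε) :
    |∫ x, exp (-f x) ∂μ - ∫ x, exp (-g x) ∂μ| ≤ ε := by
  rw [← integral_sub (integrable_exp_neg μ hf hf0) (integrable_exp_neg μ hg hg0)]
  simpa using norm_integral_le_of_norm_le_const (μ := μ)
    (f := fun x => exp (-f x) - exp (-g x)) <| ae_of_all _ fun x =>
      (abs_exp_neg_sub_exp_neg_le (hf0 x) (hg0 x)).trans (hfg x)

lemma sqrt_half_integral_sq_le [IsProbabilityMeasure μ] {F : X → ℝ} {B : ℝ}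
    (hF : ∀ x, |F x| ≤ B) : √(1 / 2 * ∫ x, F x ^ 2 ∂μ) ≤ B := by
  obtain ⟨x₀⟩ := nonempty_of_isProbabilityMeasure μ
  have hB : 0 ≤ B := (abs_nonneg _).trans (hF x₀)
  have hint : |∫ x, F x ^ 2 ∂μ| ≤ B ^ 2 := by
    simpa using norm_integral_le_of_norm_le_const (μ := μ) <| ae_of_all _ fun x =>
      (by simpa using pow_le_pow_left₀ (abs_nonneg _) (hF x) 2 : ‖F x ^ 2‖ ≤ B ^ 2)
  rw [sqrt_le_left hB]
  nlinarith [le_abs_self (∫ x, F x ^ 2 ∂μ)]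

end

/-- Hellinger stability of the posterior in the data:
`d_Hell(μ^δ, μ^{δ'}) ≤ C L e^{(3/2)M} |δ − δ'|` for an absolute constant `C`
independent of `M`, `L`, `γ`, where `μ^δ` has density `e^{−Φ(·,δ)}/Z(δ)` with
respect to the prior `μ₀`. -/
theorem hellinger_stability
    {X : Type*} [MeasurableSpace X] (μ₀ : Measure X) [IsProbabilityMeasure μ₀]
    (K : ℕ) :
    ∃ C : ℝ, 0 < C ∧
      ∀ (Φ : X → EuclideanSpace ℝ (Fin K) → ℝ) (M L γ : ℝ),
        (∀ δ, Measurable fun r => Φ r δ) →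
        (∀ r δ, 0 ≤ Φ r δ) →
        (∀ r δ, ‖δ‖ ≤ γ → Φ r δ ≤ M) →
        (∀ r δ δ', ‖δ‖ ≤ γ → ‖δ'‖ ≤ γ → |Φ r δ - Φ r δ'| ≤ L * ‖δ - δ'‖) →
        ∀ δ δ', ‖δ‖ ≤ γ → ‖δ'‖ ≤ γ →
          Real.sqrt ((1 / 2) * ∫ r,
              (Real.sqrt (Real.exp (-Φ r δ) / ∫ s, Real.exp (-Φ s δ) ∂μ₀) -
                Real.sqrt (Real.exp (-Φ r δ') / ∫ s, Real.exp (-Φ s δ') ∂μ₀)) ^ 2 ∂μ₀)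
            ≤ C * L * Real.exp ((3 / 2) * M) * ‖δ - δ'‖ := by
  refine ⟨1, one_pos, fun Φ M L γ hmeas hpos hbd hlip δ δ' hδ hδ' => ?_⟩
  obtain ⟨r₀⟩ := nonempty_of_isProbabilityMeasure μ₀
  have hM : 0 ≤ M := (hpos r₀ δ).trans (hbd r₀ δ hδ)
  have hlip' : ∀ r, |Φ r δ - Φ r δ'| ≤ L * ‖δ - δ'‖ := fun r => hlip r δ δ' hδ hδ'
  have hZ := exp_neg_le_integral_exp_neg μ₀ (hmeas δ) (hpos · δ) (hbd · δ hδ)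
  have hZ' := exp_neg_le_integral_exp_neg μ₀ (hmeas δ') (hpos · δ') (hbd · δ' hδ')
  have hZZ' := abs_integral_exp_neg_sub_le μ₀ (hmeas δ) (hmeas δ') (hpos · δ) (hpos · δ') hlip'
  rw [one_mul, mul_right_comm]
  exact sqrt_half_integral_sq_le μ₀ fun r =>
    abs_sqrt_exp_neg_div_sub_le hM (hpos r δ) (hpos r δ') (hlip' r) hZ hZ' hZZ'
end

section
/- Let μ₀ be a probability measure on X, let Φ(r,δ) = ½|Σ^{-1/2}(δ − 𝒢(r))|² with 𝒢 : X → ℝ^K bounded measurable with |𝒢(r)| ≤ B, and λ_min > 0 the least eigenvalue of the SPD matrix Σ. Set C_γ = λ_min^{-1}(γ + B). Then for all data δ, δ' with |δ|, |δ'| ≤ γ, the (normalized) posteriors μ^δ, μ^{δ'} defined by dμ^δ/dμ₀ ∝ e^{−Φ(·,δ)} satisfy d_Hell(μ^δ, μ^{δ'}) ≤ C̃ · C_γ · exp((3/4) C_γ²) · |δ − δ'| for an absolute constant C̃ > 0. -/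
/-!
With `Q(v) = ⟪Σ⁻¹v, v⟫`, the potential is `Φ(r, δ) = Q(δ - 𝒢 r) / 2`. Coercivity
`λ |u|² ≤ ⟪Σu, u⟫` makes `Σ` invertible with `|Σ⁻¹v| ≤ λ⁻¹ |v|`, so `Q ≥ 0` and
`|Q x - Q y| ≤ λ⁻¹ (|x| + |y|) |x - y|`; for `|δ|, |δ'| ≤ γ` this gives
`|Φ(r, δ) - Φ(r, δ')| ≤ C_γ |δ - δ'|` uniformly in `r`.

If two potentials satisfy `|φ - ψ| ≤ ε`, the normalising constants differ by a factor at most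
`e^ε`, so the two Gibbs densities are within a factor `e^{2ε}` of each other pointwise. Then
`|√p - √q| ≤ (e^ε - 1) √p`, and the Hellinger distance is at most `e^ε - 1 ≤ 2ε` for `ε ≤ 1`,
and at most `1 < 2ε` otherwise.
-/

open MeasureTheory Matrix Real

namespace Matrix

variable {n : Type*} [Fintype n]

lemma dotProduct_self_nonneg (v : n → ℝ) : 0 ≤ v ⬝ᵥ v :=
  Finset.sum_nonneg fun i _ => mul_self_nonneg (v i)

lemma sqrt_dotProduct_self_eq_norm (v : n → ℝ) : √(v ⬝ᵥ v) = ‖WithLp.toLp 2 v‖ := by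
  rw [norm_eq_sqrt_real_inner, EuclideanSpace.inner_toLp_toLp, star_trivial]

lemma abs_dotProduct_le (v w : n → ℝ) : |v ⬝ᵥ w| ≤ √(v ⬝ᵥ v) * √(w ⬝ᵥ w) := by
  rw [sqrt_dotProduct_self_eq_norm, sqrt_dotProduct_self_eq_norm, dotProduct_comm,
    ← star_trivial v, ← EuclideanSpace.inner_toLp_toLp]
  exact abs_real_inner_le_norm _ _

lemma sqrt_dotProduct_sub_le (v w : n → ℝ) :
    √((v - w) ⬝ᵥ (v - w)) ≤ √(v ⬝ᵥ v) + √(w ⬝ᵥ w) := by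
  simp only [sqrt_dotProduct_self_eq_norm, WithLp.toLp_sub]
  exact norm_sub_le _ _

variable [DecidableEq n] {A : Matrix n n ℝ} {c : ℝ}

lemma isUnit_of_coercive (hc : 0 < c) (hA : ∀ v, c * (v ⬝ᵥ v) ≤ (A *ᵥ v) ⬝ᵥ v) : IsUnit A := by
  refine mulVec_injective_iff_isUnit.1 fun v w hvw => ?_
  have h := hA (v - w)
  rw [mulVec_sub, hvw, sub_self, zero_dotProduct] at h
  have h0 : (v - w) ⬝ᵥ (v - w) = 0 :=
    le_antisymm (nonpos_of_mul_nonpos_right h hc) (dotProduct_self_nonneg _)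
  exact sub_eq_zero.1 (dotProduct_self_eq_zero.1 h0)

lemma mulVec_inv_mulVec_of_coercive (hc : 0 < c) (hA : ∀ v, c * (v ⬝ᵥ v) ≤ (A *ᵥ v) ⬝ᵥ v)
    (v : n → ℝ) : A *ᵥ (A⁻¹ *ᵥ v) = v := by
  rw [mulVec_mulVec, mul_nonsing_inv _ ((isUnit_iff_isUnit_det A).1 (isUnit_of_coercive hc hA)),
    one_mulVec]

lemma inv_mulVec_dotProduct_self_nonneg (hc : 0 < c) (hA : ∀ v, c * (v ⬝ᵥ v) ≤ (A *ᵥ v) ⬝ᵥ v)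
    (v : n → ℝ) : 0 ≤ (A⁻¹ *ᵥ v) ⬝ᵥ v := by
  have h := hA (A⁻¹ *ᵥ v)
  rw [mulVec_inv_mulVec_of_coercive hc hA, dotProduct_comm v] at h
  exact (mul_nonneg hc.le (dotProduct_self_nonneg _)).trans h

lemma sqrt_inv_mulVec_le (hc : 0 < c) (hA : ∀ v, c * (v ⬝ᵥ v) ≤ (A *ᵥ v) ⬝ᵥ v) (v : n → ℝ) :
    √((A⁻¹ *ᵥ v) ⬝ᵥ (A⁻¹ *ᵥ v)) ≤ c⁻¹ * √(v ⬝ᵥ v) := by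
  set u := A⁻¹ *ᵥ v
  have h := hA u
  rw [mulVec_inv_mulVec_of_coercive hc hA, ← mul_self_sqrt (dotProduct_self_nonneg u)] at h
  have hcs := h.trans ((le_abs_self _).trans (abs_dotProduct_le v u))
  rw [le_inv_mul_iff₀ hc]
  rcases (sqrt_nonneg (u ⬝ᵥ u)).eq_or_lt with h0 | hpos
  · rw [← h0, mul_zero]
    exact sqrt_nonneg _
  · rw [← mul_assoc] at hcs
    exact le_of_mul_le_mul_right hcs hpos

lemma abs_inv_mulVec_dotProduct_le (hc : 0 < c) (hA : ∀ v, c * (v ⬝ᵥ v) ≤ (A *ᵥ v) ⬝ᵥ v)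
    (v w : n → ℝ) : |(A⁻¹ *ᵥ v) ⬝ᵥ w| ≤ c⁻¹ * √(v ⬝ᵥ v) * √(w ⬝ᵥ w) :=
  (abs_dotProduct_le _ w).trans
    (mul_le_mul_of_nonneg_right (sqrt_inv_mulVec_le hc hA v) (sqrt_nonneg _))

lemma abs_inv_mulVec_dotProduct_self_sub_le (hc : 0 < c)
    (hA : ∀ v, c * (v ⬝ᵥ v) ≤ (A *ᵥ v) ⬝ᵥ v) (x y : n → ℝ) :
    |(A⁻¹ *ᵥ x) ⬝ᵥ x - (A⁻¹ *ᵥ y) ⬝ᵥ y| ≤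
      c⁻¹ * (√(x ⬝ᵥ x) + √(y ⬝ᵥ y)) * √((x - y) ⬝ᵥ (x - y)) := by
  have hsplit : (A⁻¹ *ᵥ x) ⬝ᵥ x - (A⁻¹ *ᵥ y) ⬝ᵥ y =
      (A⁻¹ *ᵥ (x - y)) ⬝ᵥ x + (A⁻¹ *ᵥ y) ⬝ᵥ (x - y) := by
    simp only [mulVec_sub, sub_dotProduct, dotProduct_sub]; ring
  have h₁ := abs_inv_mulVec_dotProduct_le hc hA (x - y) x
  have h₂ := abs_inv_mulVec_dotProduct_le hc hA y (x - y)
  rw [hsplit]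
  refine (abs_add_le _ _).trans ?_
  linarith

end Matrix

section Hellinger

variable {X : Type*} [MeasurableSpace X]

noncomputable def gibbsDensity (μ : Measure X) (φ : X → ℝ) (x : X) : ℝ :=
  exp (-φ x) / ∫ y, exp (-φ y) ∂μ

noncomputable def hellingerDist (μ : Measure X) (p q : X → ℝ) : ℝ :=
  √((1 / 2) * ∫ x, (√(p x) - √(q x)) ^ 2 ∂μ)

lemma sq_sqrt_sub_sqrt_le_add {a b : ℝ} (ha : 0 ≤ a) (hb : 0 ≤ b) :
    (√a - √b) ^ 2 ≤ a + b := by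
  nlinarith [sq_sqrt ha, sq_sqrt hb, mul_nonneg (sqrt_nonneg a) (sqrt_nonneg b)]

lemma sq_sqrt_sub_sqrt_le_of_le_mul {a b t : ℝ} (ha : 0 ≤ a) (hb : 0 ≤ b) (ht : 1 ≤ t)
    (hba : b ≤ t ^ 2 * a) (hab : a ≤ t ^ 2 * b) : (√a - √b) ^ 2 ≤ (t - 1) ^ 2 * a := by
  have hsqrt_mul : ∀ c, 0 ≤ c → √(t ^ 2 * c) = t * √c := fun c hc => by
    rw [sqrt_mul (by positivity), sqrt_sq (by linarith)]
  have hb' : √b ≤ t * √a := (sqrt_le_sqrt hba).trans_eq (hsqrt_mul a ha)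
  have ha' : √a ≤ t * √b := (sqrt_le_sqrt hab).trans_eq (hsqrt_mul b hb)
  rw [show (t - 1) ^ 2 * a = ((t - 1) * √a) ^ 2 by rw [mul_pow, sq_sqrt ha]]
  apply sq_le_sq'
  · nlinarith [sqrt_nonneg a]
  · nlinarith [sqrt_nonneg a, mul_nonneg (sq_nonneg (t - 1)) (sqrt_nonneg a)]

lemma exp_neg_le_exp_mul_exp_neg {a b ε : ℝ} (h : |a - b| ≤ ε) :
    exp (-a) ≤ exp ε * exp (-b) := by
  rw [← exp_add, exp_le_exp]
  linarith [neg_abs_le (a - b)]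

variable {μ : Measure X} {p q : X → ℝ}

lemma hellingerDist_le_one (hp0 : ∀ x, 0 ≤ p x) (hq0 : ∀ x, 0 ≤ q x) (hp : Integrable p μ)
    (hq : Integrable q μ) (hp1 : ∫ x, p x ∂μ = 1) (hq1 : ∫ x, q x ∂μ = 1) :
    hellingerDist μ p q ≤ 1 := by
  have h : ∫ x, (√(p x) - √(q x)) ^ 2 ∂μ ≤ 2 :=
    calc ∫ x, (√(p x) - √(q x)) ^ 2 ∂μ ≤ ∫ x, p x + q x ∂μ :=
          integral_mono_of_nonneg (.of_forall fun _ => sq_nonneg _) (hp.add hq)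
            (.of_forall fun x => sq_sqrt_sub_sqrt_le_add (hp0 x) (hq0 x))
      _ = 2 := by rw [integral_add hp hq, hp1, hq1]; norm_num
  rw [hellingerDist, sqrt_le_one]
  linarith

lemma hellingerDist_le_of_le_mul {t : ℝ} (hp0 : ∀ x, 0 ≤ p x) (hq0 : ∀ x, 0 ≤ q x)
    (hp : Integrable p μ) (hp1 : ∫ x, p x ∂μ = 1) (ht : 1 ≤ t)
    (hqp : ∀ x, q x ≤ t ^ 2 * p x) (hpq : ∀ x, p x ≤ t ^ 2 * q x) :
    hellingerDist μ p q ≤ t - 1 := by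
  have h : ∫ x, (√(p x) - √(q x)) ^ 2 ∂μ ≤ (t - 1) ^ 2 :=
    calc ∫ x, (√(p x) - √(q x)) ^ 2 ∂μ ≤ ∫ x, (t - 1) ^ 2 * p x ∂μ :=
          integral_mono_of_nonneg (.of_forall fun _ => sq_nonneg _) (hp.const_mul _)
            (.of_forall fun x => sq_sqrt_sub_sqrt_le_of_le_mul (hp0 x) (hq0 x) ht (hqp x) (hpq x))
      _ = (t - 1) ^ 2 := by rw [integral_const_mul, hp1, mul_one]
  rw [hellingerDist, sqrt_le_left (by linarith)]
  nlinarith [sq_nonneg (t - 1)]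

variable {φ ψ : X → ℝ} {ε : ℝ}

lemma gibbsDensity_nonneg (x : X) : 0 ≤ gibbsDensity μ φ x :=
  div_nonneg (exp_pos _).le (integral_nonneg fun _ => (exp_pos _).le)

lemma integral_exp_neg_le (hψ : Integrable (fun x => exp (-ψ x)) μ)
    (h : ∀ x, |φ x - ψ x| ≤ ε) :
    ∫ x, exp (-φ x) ∂μ ≤ exp ε * ∫ x, exp (-ψ x) ∂μ := by
  rw [← integral_const_mul]
  exact integral_mono_of_nonneg (.of_forall fun _ => (exp_pos _).le) (hψ.const_mul _)
    (.of_forall fun x => exp_neg_le_exp_mul_exp_neg (h x))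

lemma integrable_exp_neg_of_nonneg [IsFiniteMeasure μ] (hφ : Measurable φ) (h0 : ∀ x, 0 ≤ φ x) :
    Integrable (fun x => exp (-φ x)) μ :=
  .of_bound hφ.neg.exp.aestronglyMeasurable 1 <| .of_forall fun x => by
    rw [norm_of_nonneg (exp_pos _).le, exp_le_one_iff]
    linarith [h0 x]

variable [IsProbabilityMeasure μ]

lemma integral_gibbsDensity (hφ : Integrable (fun x => exp (-φ x)) μ) :
    ∫ x, gibbsDensity μ φ x ∂μ = 1 := by
  simp only [gibbsDensity]
  rw [integral_div, div_self (integral_exp_pos hφ).ne']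

lemma gibbsDensity_le_mul (hφ : Integrable (fun x => exp (-φ x)) μ)
    (hψ : Integrable (fun x => exp (-ψ x)) μ) (h : ∀ x, |φ x - ψ x| ≤ ε) (x : X) :
    gibbsDensity μ φ x ≤ exp ε ^ 2 * gibbsDensity μ ψ x := by
  have hZψ := integral_exp_pos hψ
  have hZ : (∫ y, exp (-ψ y) ∂μ) / exp ε ≤ ∫ y, exp (-φ y) ∂μ := by
    rw [div_le_iff₀' (exp_pos ε)]
    exact integral_exp_neg_le hφ fun y => (abs_sub_comm _ _).trans_le (h y)
  calc gibbsDensity μ φ x ≤ exp ε * exp (-ψ x) / ∫ y, exp (-φ y) ∂μ :=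
        div_le_div_of_nonneg_right (exp_neg_le_exp_mul_exp_neg (h x)) (integral_exp_pos hφ).le
    _ ≤ exp ε * exp (-ψ x) / ((∫ y, exp (-ψ y) ∂μ) / exp ε) :=
        div_le_div_of_nonneg_left (by positivity) (by positivity) hZ
    _ = exp ε ^ 2 * gibbsDensity μ ψ x := by
        rw [gibbsDensity]; field_simp

theorem hellingerDist_gibbsDensity_le (hφ : Integrable (fun x => exp (-φ x)) μ)
    (hψ : Integrable (fun x => exp (-ψ x)) μ) (h : ∀ x, |φ x - ψ x| ≤ ε) :
    hellingerDist μ (gibbsDensity μ φ) (gibbsDensity μ ψ) ≤ 2 * ε := by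
  have hε : 0 ≤ ε := (abs_nonneg _).trans (h (nonempty_of_isProbabilityMeasure μ).some)
  rcases le_or_gt ε 1 with hε1 | hε1
  · calc hellingerDist μ (gibbsDensity μ φ) (gibbsDensity μ ψ) ≤ exp ε - 1 :=
          hellingerDist_le_of_le_mul gibbsDensity_nonneg gibbsDensity_nonneg
            (hφ.div_const _) (integral_gibbsDensity hφ) (one_le_exp hε)
            (gibbsDensity_le_mul hψ hφ fun x => (abs_sub_comm _ _).trans_le (h x))
            (gibbsDensity_le_mul hφ hψ h)
      _ ≤ 2 * ε := by
          simpa [abs_of_nonneg hε, abs_of_nonneg (sub_nonneg.2 (one_le_exp hε))] using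
            abs_exp_sub_one_le (x := ε) (by rwa [abs_of_nonneg hε])
  · exact (hellingerDist_le_one gibbsDensity_nonneg gibbsDensity_nonneg (hφ.div_const _)
      (hψ.div_const _) (integral_gibbsDensity hφ) (integral_gibbsDensity hψ)).trans (by linarith)

end Hellinger

theorem gaussian_posterior_hellinger_stability_general
    {X : Type*} [MeasurableSpace X] (μ₀ : Measure X) [IsProbabilityMeasure μ₀]
    (K : ℕ) (Sig : Matrix (Fin K) (Fin K) ℝ) :
    ∃ C : ℝ, 0 < C ∧
      ∀ (𝒢 : X → (Fin K → ℝ)), Measurable 𝒢 →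
      ∀ (B lmin γ : ℝ), 0 < lmin →
        (∀ v : Fin K → ℝ, lmin * (v ⬝ᵥ v) ≤ (Sig *ᵥ v) ⬝ᵥ v) →
        (∀ r, Real.sqrt (𝒢 r ⬝ᵥ 𝒢 r) ≤ B) →
        ∀ δ δ' : Fin K → ℝ, Real.sqrt (δ ⬝ᵥ δ) ≤ γ → Real.sqrt (δ' ⬝ᵥ δ') ≤ γ →
          (let Φ : X → (Fin K → ℝ) → ℝ :=
            fun r e => (1 / 2) * ((Sig⁻¹ *ᵥ (e - 𝒢 r)) ⬝ᵥ (e - 𝒢 r));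
          let Cγ : ℝ := lmin⁻¹ * (γ + B);
          Real.sqrt ((1 / 2) * ∫ r,
              (Real.sqrt (Real.exp (-Φ r δ) / ∫ s, Real.exp (-Φ s δ) ∂μ₀) -
                Real.sqrt (Real.exp (-Φ r δ') / ∫ s, Real.exp (-Φ s δ') ∂μ₀)) ^ 2 ∂μ₀)
            ≤ C * Cγ * Real.exp ((3 / 4) * Cγ ^ 2) *
              Real.sqrt ((δ - δ') ⬝ᵥ (δ - δ'))) := by
  refine ⟨2, two_pos, fun 𝒢 h𝒢 B lmin γ hl hlow hB δ δ' hδ hδ' => ?_⟩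
  intro Φ Cγ
  have hmisfit : ∀ r e, √(e ⬝ᵥ e) ≤ γ → √((e - 𝒢 r) ⬝ᵥ (e - 𝒢 r)) ≤ γ + B := fun r e he =>
    (sqrt_dotProduct_sub_le e (𝒢 r)).trans (add_le_add he (hB r))
  have hCγ : 0 ≤ Cγ := mul_nonneg (inv_nonneg.2 hl.le)
    ((sqrt_nonneg _).trans (hmisfit (nonempty_of_isProbabilityMeasure μ₀).some δ hδ))
  have hΦ_int : ∀ e, Integrable (fun r => exp (-Φ r e)) μ₀ := fun e =>
    integrable_exp_neg_of_nonneg (by fun_prop)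
      fun r => mul_nonneg one_half_pos.le (inv_mulVec_dotProduct_self_nonneg hl hlow _)
  have hΦ_lip : ∀ r, |Φ r δ - Φ r δ'| ≤ Cγ * √((δ - δ') ⬝ᵥ (δ - δ')) := fun r => by
    have h := abs_inv_mulVec_dotProduct_self_sub_le hl hlow (δ - 𝒢 r) (δ' - 𝒢 r)
    rw [sub_sub_sub_cancel_right] at h
    calc |Φ r δ - Φ r δ'| = 1 / 2 * |(Sig⁻¹ *ᵥ (δ - 𝒢 r)) ⬝ᵥ (δ - 𝒢 r)
          - (Sig⁻¹ *ᵥ (δ' - 𝒢 r)) ⬝ᵥ (δ' - 𝒢 r)| := by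
          rw [← mul_sub, abs_mul, abs_of_pos one_half_pos]
      _ ≤ 1 / 2 * (lmin⁻¹ * ((γ + B) + (γ + B)) * √((δ - δ') ⬝ᵥ (δ - δ'))) := by
          gcongr
          exact h.trans (by gcongr <;> exact hmisfit r _ ‹_›)
      _ = Cγ * √((δ - δ') ⬝ᵥ (δ - δ')) := by ring
  calc hellingerDist μ₀ (gibbsDensity μ₀ (Φ · δ)) (gibbsDensity μ₀ (Φ · δ'))
      ≤ 2 * (Cγ * √((δ - δ') ⬝ᵥ (δ - δ'))) :=
        hellingerDist_gibbsDensity_le (hΦ_int δ) (hΦ_int δ') hΦ_lip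
    _ ≤ 2 * Cγ * exp ((3 / 4) * Cγ ^ 2) * √((δ - δ') ⬝ᵥ (δ - δ')) := by
        nlinarith [mul_nonneg hCγ (sqrt_nonneg ((δ - δ') ⬝ᵥ (δ - δ'))),
          one_le_exp (by positivity : 0 ≤ (3 / 4) * Cγ ^ 2)]

/-- Hellinger stability for the Gaussian posterior: with
`Φ(r,δ) = ½|Σ^{-1/2}(δ−𝒢(r))|²` (written via the quadratic form of `Σ⁻¹`),
`|𝒢| ≤ B`, and `C_γ = λ_min^{-1}(γ+B)`, the posteriors satisfy
`d_Hell(μ^δ, μ^{δ'}) ≤ C̃ C_γ exp((3/4)C_γ²)|δ−δ'|` for an absolute `C̃ > 0`. -/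
theorem gaussian_posterior_hellinger_stability
    {X : Type*} [MeasurableSpace X] (μ₀ : Measure X) [IsProbabilityMeasure μ₀]
    (K : ℕ) (Sig : Matrix (Fin K) (Fin K) ℝ) (hpd : Sig.PosDef) :
    ∃ C : ℝ, 0 < C ∧
      ∀ (𝒢 : X → (Fin K → ℝ)), Measurable 𝒢 →
      ∀ (B lmin γ : ℝ), 0 < lmin →
        (∀ v : Fin K → ℝ, lmin * (v ⬝ᵥ v) ≤ (Sig *ᵥ v) ⬝ᵥ v) →
        (∀ r, Real.sqrt (𝒢 r ⬝ᵥ 𝒢 r) ≤ B) →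
        ∀ δ δ' : Fin K → ℝ, Real.sqrt (δ ⬝ᵥ δ) ≤ γ → Real.sqrt (δ' ⬝ᵥ δ') ≤ γ →
          (let Φ : X → (Fin K → ℝ) → ℝ :=
            fun r e => (1 / 2) * ((Sig⁻¹ *ᵥ (e - 𝒢 r)) ⬝ᵥ (e - 𝒢 r));
          let Cγ : ℝ := lmin⁻¹ * (γ + B);
          Real.sqrt ((1 / 2) * ∫ r,
              (Real.sqrt (Real.exp (-Φ r δ) / ∫ s, Real.exp (-Φ s δ) ∂μ₀) -
                Real.sqrt (Real.exp (-Φ r δ') / ∫ s, Real.exp (-Φ s δ') ∂μ₀)) ^ 2 ∂μ₀)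
            ≤ C * Cγ * Real.exp ((3 / 4) * Cγ ^ 2) *
              Real.sqrt ((δ - δ') ⬝ᵥ (δ - δ'))) :=
  gaussian_posterior_hellinger_stability_general μ₀ K Sig
end
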